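/- Fix p ∈ (1, ∞). The best constant in the strong type (p,p) inequality for the uncentered maximal operator on the integers equals the best constant in the strong type (p,p) inequality for the uncentered Hardy–Littlewood maximal operator on the real line: C^u(X₁, p) = c_p, where c_p is the smallest constant C such that ‖M_ℝ^u g‖_{L^p(ℝ)} ≤ C‖g‖_{L^p(ℝ)} for all g ∈ L^p(ℝ). -/

import Mathlib

open MeasureTheory ENNReal Filter

noncomputable section

variable {X : Type*} [MeasurableSpace X]

/-- The one-sided ergodic maximal operator `M⁻f(x) = sup_N |(1/(N+1)) Σ_{n=0}^N f(Tⁿx)|`. -/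
def maxOS (T : Equiv.Perm X) (f : X → ℝ) (x : X) : ℝ≥0∞ :=
  ⨆ N : ℕ,
    (‖(∑ n ∈ Finset.range (N + 1), f ((T ^ n) x)) / ((N : ℝ) + 1)‖₊ : ℝ≥0∞)

/-- The centered ergodic maximal operator `M^c f(x) = sup_N |(1/(2N+1)) Σ_{n=-N}^N f(Tⁿx)|`. -/
def maxC (T : Equiv.Perm X) (f : X → ℝ) (x : X) : ℝ≥0∞ :=
  ⨆ N : ℕ,
    (‖(∑ n ∈ Finset.Icc (-(N : ℤ)) (N : ℤ), f ((T ^ n) x)) / (2 * (N : ℝ) + 1)‖₊ : ℝ≥0∞)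

/-- The uncentered ergodic maximal operator
`M^u f(x) = sup_{r,s ≥ 0} |(1/(r+s+1)) Σ_{n=-r}^{s} f(Tⁿx)|`. -/
def maxU (T : Equiv.Perm X) (f : X → ℝ) (x : X) : ℝ≥0∞ :=
  ⨆ r : ℕ, ⨆ s : ℕ,
    (‖(∑ n ∈ Finset.Icc (-(r : ℤ)) (s : ℤ), f ((T ^ n) x)) / ((r : ℝ) + (s : ℝ) + 1)‖₊ : ℝ≥0∞)

/-- The best constant in the weak type (1,1) inequality for a maximal operator `M`:
the smallest `C` with `λ · μ({x : M f(x) ≥ λ}) ≤ C ‖f‖₁` for all `f ∈ L¹(μ)` and all `λ`. -/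
def weakConst (μ : Measure X) (M : (X → ℝ) → X → ℝ≥0∞) : ℝ≥0∞ :=
  sInf {C | ∀ f : X → ℝ, Integrable f μ →
    ∀ l : ℝ≥0∞, l * μ {x | l ≤ M f x} ≤ C * eLpNorm f 1 μ}

/-- The best constant in the strong type (p,p) inequality for a maximal operator `M`:
the smallest `C` with `‖M f‖_p ≤ C ‖f‖_p` for all `f ∈ L^p(μ)`. -/
def strongConst (μ : Measure X) (M : (X → ℝ) → X → ℝ≥0∞) (p : ℝ) : ℝ≥0∞ :=
  sInf {C | ∀ f : X → ℝ, MemLp f (ENNReal.ofReal p) μ →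
    (∫⁻ x, M f x ^ p ∂μ) ^ (1 / p) ≤ C * eLpNorm f (ENNReal.ofReal p) μ}

/-- The best constant in the `L^∞` inequality for a maximal operator `M`. -/
def supConst (μ : Measure X) (M : (X → ℝ) → X → ℝ≥0∞) : ℝ≥0∞ :=
  sInf {C | ∀ f : X → ℝ, MemLp f ∞ μ → essSup (M f) μ ≤ C * eLpNorm f ∞ μ}

/-- The best constant `C_M(X, p)` for `p ∈ [1,∞]`: the weak type (1,1) constant for `p = 1`,
the `L^∞` constant for `p = ∞`, and the strong type (p,p) constant for `p ∈ (1,∞)`. -/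
def bestConst (μ : Measure X) (M : (X → ℝ) → X → ℝ≥0∞) (p : ℝ≥0∞) : ℝ≥0∞ :=
  if p = 1 then weakConst μ M
  else if p = ∞ then supConst μ M
  else strongConst μ M p.toReal

/-- The shift `l ↦ l + 1` on `ℤ`, the transformation of the canonical system `X₁`. -/
def shiftZ : Equiv.Perm ℤ := Equiv.addRight 1

/-- Ergodicity of an invertible transformation:
`T⁻¹(E) = E` implies `μ(E) = 0` or `μ(X \ E) = 0`. -/
def IsErgodicPerm (μ : Measure X) (T : Equiv.Perm X) : Prop :=
  ∀ E : Set X, MeasurableSet E → (⇑T) ⁻¹' E = E → μ E = 0 ∨ μ Eᶜ = 0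

/-- Nontriviality of a measure space: there is a set of strictly positive finite measure. -/
def NontrivialSpace (μ : Measure X) : Prop :=
  ∃ E : Set X, MeasurableSet E ∧ 0 < μ E ∧ μ E < ∞

/-- `X` consists of finitely many atoms: it splits into disjoint measurable sets
`X₀, X₁, …, X_L` with `μ(X₀) = 0`, `T(X_l) ⊆ X_{l+1}` for `1 ≤ l ≤ L-1`, `T(X_L) ⊆ X₁`, and
no `X_l`, `1 ≤ l ≤ L`, splits into two disjoint measurable sets of nonzero measure. -/
def FinitelyManyAtoms (μ : Measure X) (T : Equiv.Perm X) : Prop :=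
  ∃ (L : ℕ) (A : ℕ → Set X), 0 < L ∧
    (∀ l, l ≤ L → MeasurableSet (A l)) ∧
    (∀ l l', l ≤ L → l' ≤ L → l ≠ l' → Disjoint (A l) (A l')) ∧
    (⋃ l ≤ L, A l) = Set.univ ∧
    μ (A 0) = 0 ∧
    (∀ l, 1 ≤ l → l ≤ L - 1 → ⇑T '' A l ⊆ A (l + 1)) ∧
    (⇑T '' A L ⊆ A 1) ∧
    (∀ l, 1 ≤ l → l ≤ L → ∀ S : Set X, MeasurableSet S → S ⊆ A l →
      μ S = 0 ∨ μ (A l \ S) = 0)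

/-- The Rokhlin condition (case (B) of the Kakutani–Rokhlin lemma): for each `L ∈ ℕ` there is
a set `E_L` of strictly positive finite measure with `T^{-l}(E_L)`, `l ∈ [L]`, disjoint. -/
def RokhlinCondition (μ : Measure X) (T : Equiv.Perm X) : Prop :=
  ∀ L : ℕ, 0 < L → ∃ E : Set X, MeasurableSet E ∧ 0 < μ E ∧ μ E < ∞ ∧
    ∀ l l' : ℕ, 1 ≤ l → l ≤ L → 1 ≤ l' → l' ≤ L → l ≠ l' →
      Disjoint ((⇑(T ^ l)) ⁻¹' E) ((⇑(T ^ l')) ⁻¹' E)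


/-- The uncentered Hardy–Littlewood maximal operator on `ℝ`:
`M_ℝ^u g(x) = sup { (1/|I|) ∫_I |g| : I a bounded interval containing x }`. -/
def maxRU (g : ℝ → ℝ) (x : ℝ) : ℝ≥0∞ :=
  ⨆ (a : ℝ) (b : ℝ) (_ : a ≤ x) (_ : x ≤ b) (_ : a < b),
    (∫⁻ y in Set.Ioo a b, (‖g y‖₊ : ℝ≥0∞)) / ENNReal.ofReal (b - a)

/-- The best constant in the strong type (p,p) inequality for the uncentered
Hardy–Littlewood maximal operator on `ℝ`. -/
def strongConstRU (p : ℝ) : ℝ≥0∞ :=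
  sInf {C | ∀ g : ℝ → ℝ, MemLp g (ENNReal.ofReal p) (volume : Measure ℝ) →
    (∫⁻ x, maxRU g x ^ p) ^ (1 / p) ≤ C * eLpNorm g (ENNReal.ofReal p) (volume : Measure ℝ)}


/-! Both inequalities compare `ℤ` with `ℝ` through the grid `(1/N)ℤ`.

A function `f` on `ℤ` lifts to the step function `f ∘ ⌊·⌋`, which has the same `L^p` norm and
whose real maximal function dominates `M^u f` on every unit cell; hence `C^u(X₁, p) ≤ c_p`.

Conversely, for `g` on `ℝ` let `F_N(m)` be the mass of `|g|` on the cell `[m/N, (m+1)/N)`.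
Covering an interval `I ∋ x` by cells shows that the average of `|g|` over `I` is at most
`(1 + 2/(N|I|)) · N · M^u F_N(⌊N x⌋)`, while Jensen's inequality on each cell gives
`‖F_N‖_p^p ≤ N^{1-p} ‖g‖_p^p`. So `N · M^u F_N(⌊N ·⌋)` has `L^p` norm at most `C^u(X₁, p) ‖g‖_p`,
and it dominates `M_ℝ^u g` in the limit `N → ∞`; Fatou's lemma gives `c_p ≤ C^u(X₁, p)`. -/

open Set

section Fibers

variable {α ι : Type*} [MeasurableSpace α] [MeasurableSpace ι] [MeasurableSingletonClass ι]
  {μ : Measure α} {φ : α → ι}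

lemma setLIntegral_preimage_finset (hφ : Measurable φ) (s : Finset ι) (h : α → ℝ≥0∞) :
    ∫⁻ x in φ ⁻¹' s, h x ∂μ = ∑ i ∈ s, ∫⁻ x in φ ⁻¹' {i}, h x ∂μ := by
  rw [← biUnion_preimage_singleton, Finset.set_biUnion_coe, lintegral_biUnion_finset]
  · exact fun i _ j _ hij => disjoint_singleton.2 hij |>.preimage φ
  · exact fun i _ => hφ (measurableSet_singleton i)

lemma lintegral_eq_tsum_preimage_singleton [Countable ι] (hφ : Measurable φ) (h : α → ℝ≥0∞) :
    ∫⁻ x, h x ∂μ = ∑' i, ∫⁻ x in φ ⁻¹' {i}, h x ∂μ := by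
  rw [← lintegral_iUnion (fun i => hφ (measurableSet_singleton i))
    (fun i j hij => disjoint_singleton.2 hij |>.preimage φ), ← preimage_iUnion,
    iUnion_singleton_eq_range, range_id', preimage_univ, setLIntegral_univ]

end Fibers

def gridIndex (N : ℕ) (y : ℝ) : ℤ := ⌊(N : ℝ) * y⌋

lemma measurable_gridIndex (N : ℕ) : Measurable (gridIndex N) :=
  Int.measurable_floor.comp (measurable_const_mul _)

lemma volume_gridIndex_preimage_singleton {N : ℕ} (hN : N ≠ 0) (m : ℤ) :
    volume (gridIndex N ⁻¹' {m}) = (N : ℝ≥0∞)⁻¹ := by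
  rw [show gridIndex N ⁻¹' {m} = (fun y => (N : ℝ) * y) ⁻¹' (Int.floor ⁻¹' {m}) from rfl,
    Real.volume_preimage_mul_left (Nat.cast_ne_zero.2 hN), Int.preimage_floor_singleton,
    Real.volume_Ico, add_sub_cancel_left, ENNReal.ofReal_one, mul_one, abs_inv, abs_of_pos (by positivity),
    ENNReal.ofReal_inv_of_pos (by positivity), ENNReal.ofReal_natCast]

lemma setLIntegral_comp_gridIndex_singleton {N : ℕ} (hN : N ≠ 0) (H : ℤ → ℝ≥0∞) (m : ℤ) :
    ∫⁻ y in gridIndex N ⁻¹' {m}, H (gridIndex N y) = (N : ℝ≥0∞)⁻¹ * H m := by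
  rw [setLIntegral_congr_fun (measurable_gridIndex N (measurableSet_singleton m))
    (fun y (hy : gridIndex N y = m) => by rw [hy]), setLIntegral_const,
    volume_gridIndex_preimage_singleton hN, mul_comm]

lemma setLIntegral_comp_gridIndex {N : ℕ} (hN : N ≠ 0) (H : ℤ → ℝ≥0∞) (s : Finset ℤ) :
    ∫⁻ y in gridIndex N ⁻¹' s, H (gridIndex N y) = (N : ℝ≥0∞)⁻¹ * ∑ m ∈ s, H m := by
  simp_rw [setLIntegral_preimage_finset (measurable_gridIndex N),
    setLIntegral_comp_gridIndex_singleton hN, Finset.mul_sum]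

lemma lintegral_comp_gridIndex {N : ℕ} (hN : N ≠ 0) (H : ℤ → ℝ≥0∞) :
    ∫⁻ y, H (gridIndex N y) = (N : ℝ≥0∞)⁻¹ * ∑' m, H m := by
  rw [lintegral_eq_tsum_preimage_singleton (measurable_gridIndex N), ← ENNReal.tsum_mul_left]
  simp_rw [setLIntegral_comp_gridIndex_singleton hN]

section StrongType

variable {μ : Measure X} {p : ℝ}

def StrongTypeBound (μ : Measure X) (M : (X → ℝ) → X → ℝ≥0∞) (p : ℝ) (C : ℝ≥0∞) : Prop :=
  ∀ f : X → ℝ, MemLp f (ENNReal.ofReal p) μ →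
    (∫⁻ x, M f x ^ p ∂μ) ^ (1 / p) ≤ C * eLpNorm f (ENNReal.ofReal p) μ

lemma eLpNorm_ofReal_eq (hp : 0 < p) (f : X → ℝ) :
    eLpNorm f (ENNReal.ofReal p) μ = (∫⁻ x, ‖f x‖ₑ ^ p ∂μ) ^ (1 / p) := by
  rw [eLpNorm_eq_lintegral_rpow_enorm_toReal (by simpa using hp) ENNReal.ofReal_ne_top,
    ENNReal.toReal_ofReal hp.le]

lemma lintegral_enorm_rpow_ne_top (hp : 0 < p) {f : X → ℝ} (hf : MemLp f (ENNReal.ofReal p) μ) :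
    ∫⁻ x, ‖f x‖ₑ ^ p ∂μ ≠ ∞ := by
  have h := lintegral_rpow_enorm_lt_top_of_eLpNorm_lt_top (by simpa using hp)
    ENNReal.ofReal_ne_top hf.2
  rw [ENNReal.toReal_ofReal hp.le] at h
  exact h.ne

lemma strongTypeBound_iff (hp : 0 < p) {M : (X → ℝ) → X → ℝ≥0∞} {C : ℝ≥0∞} :
    StrongTypeBound μ M p C ↔ ∀ f : X → ℝ, MemLp f (ENNReal.ofReal p) μ →
      ∫⁻ x, M f x ^ p ∂μ ≤ C ^ p * ∫⁻ x, ‖f x‖ₑ ^ p ∂μ := by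
  have hpow : ∀ a b : ℝ≥0∞, a ^ (1 / p) ≤ C * b ^ (1 / p) ↔ a ≤ C ^ p * b := fun a b => by
    rw [← ENNReal.rpow_le_rpow_iff hp, ENNReal.mul_rpow_of_nonneg _ _ hp.le, ← ENNReal.rpow_mul,
      ← ENNReal.rpow_mul, one_div_mul_cancel hp.ne', ENNReal.rpow_one, ENNReal.rpow_one]
  simp_rw [StrongTypeBound, eLpNorm_ofReal_eq hp, hpow]

end StrongType

lemma strongConstRU_eq (p : ℝ) : strongConstRU p = strongConst volume maxRU p := rfl

lemma shiftZ_zpow_apply (n l : ℤ) : (shiftZ ^ n) l = l + n := by simp [shiftZ]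

lemma maxU_shiftZ_apply (f : ℤ → ℝ) (l : ℤ) :
    maxU shiftZ f l = ⨆ (r : ℕ) (s : ℕ),
      ‖(∑ n ∈ Finset.Icc (-(r : ℤ)) s, f (l + n)) / ((r : ℝ) + s + 1)‖ₑ := by
  simp only [maxU, shiftZ_zpow_apply, enorm_eq_nnnorm]

lemma sum_Icc_add_left {M : Type*} [AddCommMonoid M] (F : ℤ → M) (l a b : ℤ) :
    ∑ n ∈ Finset.Icc a b, F (l + n) = ∑ m ∈ Finset.Icc (l + a) (l + b), F m := by
  rw [← Finset.map_add_left_Icc, Finset.sum_map]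
  rfl

lemma sum_ofReal_le_mul_maxU_shiftZ {f : ℤ → ℝ} (hf : 0 ≤ f) {A B l : ℤ} (hA : A ≤ l)
    (hB : l ≤ B) :
    ∑ m ∈ Finset.Icc A B, ENNReal.ofReal (f m) ≤ ENNReal.ofReal (B - A + 1) * maxU shiftZ f l := by
  obtain ⟨r, rfl⟩ : ∃ r : ℕ, A = l - r := ⟨(l - A).toNat, by omega⟩
  obtain ⟨s, rfl⟩ : ∃ s : ℕ, B = l + s := ⟨(B - l).toNat, by omega⟩
  have hlen : ((l + s : ℤ) : ℝ) - ((l - r : ℤ) : ℝ) + 1 = r + s + 1 := by push_cast; ring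
  have hsum : ∑ m ∈ Finset.Icc (l - r) (l + s), f m = ∑ n ∈ Finset.Icc (-(r : ℤ)) s, f (l + n) := by
    rw [sum_Icc_add_left, sub_eq_add_neg]
  have hS : 0 ≤ ∑ n ∈ Finset.Icc (-(r : ℤ)) s, f (l + n) := Finset.sum_nonneg fun n _ => hf _
  calc ∑ m ∈ Finset.Icc (l - r) (l + s), ENNReal.ofReal (f m)
      = ENNReal.ofReal (r + s + 1) *
          ‖(∑ n ∈ Finset.Icc (-(r : ℤ)) s, f (l + n)) / ((r : ℝ) + s + 1)‖ₑ := by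
        rw [← ENNReal.ofReal_sum_of_nonneg fun m _ => hf m, hsum,
          Real.enorm_of_nonneg (by positivity), ← ENNReal.ofReal_mul (by positivity),
          mul_div_cancel₀ _ (by positivity)]
    _ ≤ ENNReal.ofReal (((l + s : ℤ) : ℝ) - ((l - r : ℤ) : ℝ) + 1) * maxU shiftZ f l := by
        rw [hlen, maxU_shiftZ_apply]
        gcongr
        exact le_iSup₂_of_le r s le_rfl

lemma le_maxRU (g : ℝ → ℝ) {a b x : ℝ} (ha : a ≤ x) (hb : x ≤ b) (hab : a < b) :
    (∫⁻ y in Ioo a b, ‖g y‖ₑ) / ENNReal.ofReal (b - a) ≤ maxRU g x :=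
  le_iSup_of_le a <| le_iSup_of_le b <| le_iSup_of_le ha <| le_iSup_of_le hb <|
    le_iSup_of_le hab le_rfl

lemma enorm_sum_div_le {ι : Type*} (s : Finset ι) (f : ι → ℝ) {c : ℝ} (hc : 0 < c) :
    ‖(∑ i ∈ s, f i) / c‖ₑ ≤ (∑ i ∈ s, ‖f i‖ₑ) / ENNReal.ofReal c := by
  rw [enorm_eq_nnnorm, nnnorm_div, ENNReal.coe_div (nnnorm_ne_zero_iff.2 hc.ne'), ← enorm_eq_nnnorm,
    ← enorm_eq_nnnorm, Real.enorm_of_nonneg hc.le]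
  gcongr
  exact enorm_sum_le s f

lemma gridIndex_one_preimage_Icc (A B : ℤ) :
    gridIndex 1 ⁻¹' ↑(Finset.Icc A B) = Ico (A : ℝ) (B + 1) := by
  ext y
  simp [gridIndex, Int.le_floor, Int.floor_le_iff]

lemma maxU_shiftZ_le_maxRU (f : ℤ → ℝ) (x : ℝ) :
    maxU shiftZ f (gridIndex 1 x) ≤ maxRU (fun y => f (gridIndex 1 y)) x := by
  set l := gridIndex 1 x
  have hx : x ∈ Ico (l : ℝ) (l + 1) := by
    rw [← gridIndex_one_preimage_Icc, Finset.Icc_self, Finset.coe_singleton]; rfl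
  rw [maxU_shiftZ_apply]
  refine iSup₂_le fun r s => ?_
  have hint : ∫⁻ y in Ioo ((l - r : ℤ) : ℝ) ((l + s : ℤ) + 1), ‖f (gridIndex 1 y)‖ₑ
      = ∑ n ∈ Finset.Icc (-(r : ℤ)) s, ‖f (l + n)‖ₑ := by
    rw [setLIntegral_congr Ioo_ae_eq_Ico, ← gridIndex_one_preimage_Icc,
      setLIntegral_comp_gridIndex one_ne_zero (fun m => ‖f m‖ₑ), Nat.cast_one, inv_one, one_mul,
      sum_Icc_add_left (fun m => ‖f m‖ₑ), sub_eq_add_neg]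
  have hlen : ((l + s : ℤ) : ℝ) + 1 - ((l - r : ℤ) : ℝ) = r + s + 1 := by push_cast; ring
  calc ‖(∑ n ∈ Finset.Icc (-(r : ℤ)) s, f (l + n)) / ((r : ℝ) + s + 1)‖ₑ
      ≤ (∑ n ∈ Finset.Icc (-(r : ℤ)) s, ‖f (l + n)‖ₑ) / ENNReal.ofReal (r + s + 1) :=
        enorm_sum_div_le _ _ (by positivity)
    _ = (∫⁻ y in Ioo ((l - r : ℤ) : ℝ) ((l + s : ℤ) + 1), ‖f (gridIndex 1 y)‖ₑ) /
          ENNReal.ofReal (((l + s : ℤ) : ℝ) + 1 - ((l - r : ℤ) : ℝ)) := by rw [hint, hlen]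
    _ ≤ maxRU (fun y => f (gridIndex 1 y)) x := by
        refine le_maxRU _ ?_ ?_ (by rw [← sub_pos, hlen]; positivity)
        · have := hx.1; push_cast; linarith [(r.cast_nonneg : (0 : ℝ) ≤ r)]
        · have := hx.2; push_cast; linarith [(s.cast_nonneg : (0 : ℝ) ≤ s)]

lemma strongTypeBound_int_of_real {p : ℝ} (hp : 0 < p) {C : ℝ≥0∞}
    (hC : StrongTypeBound volume maxRU p C) : StrongTypeBound Measure.count (maxU shiftZ) p C := by
  rw [strongTypeBound_iff hp] at hC ⊢
  intro f hf
  have hcount : ∀ H : ℤ → ℝ≥0∞, ∫⁻ m, H m ∂Measure.count = ∫⁻ y, H (gridIndex 1 y) := fun H => by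
    rw [lintegral_count, lintegral_comp_gridIndex one_ne_zero, Nat.cast_one, inv_one, one_mul]
  have hg : MemLp (fun y => f (gridIndex 1 y)) (ENNReal.ofReal p) volume := by
    refine ⟨((measurable_of_countable f).comp (measurable_gridIndex 1)).aestronglyMeasurable, ?_⟩
    rw [eLpNorm_ofReal_eq hp, ← hcount fun m => ‖f m‖ₑ ^ p, ← eLpNorm_ofReal_eq hp]
    exact hf.2
  calc ∫⁻ m, maxU shiftZ f m ^ p ∂Measure.count
      = ∫⁻ y, maxU shiftZ f (gridIndex 1 y) ^ p := hcount _
    _ ≤ ∫⁻ y, maxRU (fun y => f (gridIndex 1 y)) y ^ p :=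
        lintegral_mono fun y => ENNReal.rpow_le_rpow (maxU_shiftZ_le_maxRU f y) hp.le
    _ ≤ C ^ p * ∫⁻ y, ‖f (gridIndex 1 y)‖ₑ ^ p := hC _ hg
    _ = C ^ p * ∫⁻ m, ‖f m‖ₑ ^ p ∂Measure.count := by rw [hcount fun m => ‖f m‖ₑ ^ p]

lemma lintegral_rpow_le_measure_univ_rpow_mul {α : Type*} [MeasurableSpace α] {μ : Measure α}
    {p : ℝ} (hp : 1 ≤ p) {f : α → ℝ≥0∞} (hf : AEMeasurable f μ) :
    (∫⁻ x, f x ∂μ) ^ p ≤ μ univ ^ (p - 1) * ∫⁻ x, f x ^ p ∂μ := by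
  have hp0 : 0 < p := one_pos.trans_le hp
  have h := eLpNorm'_le_eLpNorm'_mul_rpow_measure_univ one_pos hp hf.aestronglyMeasurable
  simp only [eLpNorm', enorm_eq_self, ENNReal.rpow_one, div_one] at h
  calc (∫⁻ x, f x ∂μ) ^ p
      ≤ ((∫⁻ x, f x ^ p ∂μ) ^ (1 / p) * μ univ ^ (1 - 1 / p)) ^ p :=
        ENNReal.rpow_le_rpow h hp0.le
    _ = μ univ ^ (p - 1) * ∫⁻ x, f x ^ p ∂μ := by
        rw [ENNReal.mul_rpow_of_nonneg _ _ hp0.le, ← ENNReal.rpow_mul, ← ENNReal.rpow_mul,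
          one_div_mul_cancel hp0.ne', ENNReal.rpow_one, mul_comm,
          show (1 - 1 / p) * p = p - 1 by field_simp]

def cellMass (g : ℝ → ℝ) (N : ℕ) (m : ℤ) : ℝ≥0∞ :=
  ∫⁻ y in gridIndex N ⁻¹' {m}, ‖g y‖ₑ

lemma tsum_cellMass_rpow_le {p : ℝ} (hp : 1 ≤ p) {g : ℝ → ℝ} (hg : AEStronglyMeasurable g)
    {N : ℕ} (hN : N ≠ 0) :
    ∑' m, cellMass g N m ^ p ≤ (N : ℝ≥0∞) ^ (1 - p) * ∫⁻ y, ‖g y‖ₑ ^ p := by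
  rw [lintegral_eq_tsum_preimage_singleton (measurable_gridIndex N), ← ENNReal.tsum_mul_left]
  refine ENNReal.tsum_le_tsum fun m => ?_
  have h := lintegral_rpow_le_measure_univ_rpow_mul hp (hg.enorm.restrict (s := gridIndex N ⁻¹' {m}))
  rwa [Measure.restrict_apply_univ, volume_gridIndex_preimage_singleton hN, ENNReal.inv_rpow,
    ← ENNReal.rpow_neg, neg_sub] at h

lemma setLIntegral_Ioo_le_mul_maxU (g : ℝ → ℝ) (N : ℕ) {f : ℤ → ℝ} (hf : 0 ≤ f)
    (hfg : ∀ m, cellMass g N m ≤ ENNReal.ofReal (f m)) {a b x : ℝ} (ha : a ≤ x) (hb : x ≤ b) :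
    ∫⁻ y in Ioo a b, ‖g y‖ₑ ≤ ENNReal.ofReal (N * (b - a) + 2) * maxU shiftZ f (gridIndex N x) := by
  have hmono : Monotone (gridIndex N) := fun y z h =>
    Int.floor_mono (mul_le_mul_of_nonneg_left h N.cast_nonneg)
  have hsub : Ioo a b ⊆ gridIndex N ⁻¹' ↑(Finset.Icc (gridIndex N a) (gridIndex N b)) :=
    fun y hy => by simpa using ⟨hmono hy.1.le, hmono hy.2.le⟩
  have hlen : (gridIndex N b : ℝ) - gridIndex N a + 1 ≤ N * (b - a) + 2 := by
    have hA := Int.sub_one_lt_floor ((N : ℝ) * a)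
    have hB := Int.floor_le ((N : ℝ) * b)
    simp only [gridIndex]
    linarith
  calc ∫⁻ y in Ioo a b, ‖g y‖ₑ
      ≤ ∫⁻ y in gridIndex N ⁻¹' ↑(Finset.Icc (gridIndex N a) (gridIndex N b)), ‖g y‖ₑ :=
        lintegral_mono_set hsub
    _ = ∑ m ∈ Finset.Icc (gridIndex N a) (gridIndex N b), cellMass g N m :=
        setLIntegral_preimage_finset (measurable_gridIndex N) _ _
    _ ≤ ∑ m ∈ Finset.Icc (gridIndex N a) (gridIndex N b), ENNReal.ofReal (f m) :=
        Finset.sum_le_sum fun m _ => hfg m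
    _ ≤ ENNReal.ofReal ((gridIndex N b : ℝ) - gridIndex N a + 1) * maxU shiftZ f (gridIndex N x) :=
        sum_ofReal_le_mul_maxU_shiftZ hf (hmono ha) (hmono hb)
    _ ≤ ENNReal.ofReal (N * (b - a) + 2) * maxU shiftZ f (gridIndex N x) := by
        gcongr

lemma average_le_mul_scaled_maxU (g : ℝ → ℝ) {N : ℕ} (hN : N ≠ 0) {f : ℤ → ℝ} (hf : 0 ≤ f)
    (hfg : ∀ m, cellMass g N m ≤ ENNReal.ofReal (f m)) {a b x : ℝ} (ha : a ≤ x) (hb : x ≤ b)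
    (hab : a < b) :
    (∫⁻ y in Ioo a b, ‖g y‖ₑ) / ENNReal.ofReal (b - a)
      ≤ ENNReal.ofReal (1 + 2 / (N * (b - a))) * (N * maxU shiftZ f (gridIndex N x)) := by
  have hL : 0 < b - a := sub_pos.2 hab
  calc (∫⁻ y in Ioo a b, ‖g y‖ₑ) / ENNReal.ofReal (b - a)
      ≤ ENNReal.ofReal (N * (b - a) + 2) * maxU shiftZ f (gridIndex N x) / ENNReal.ofReal (b - a) :=
        ENNReal.div_le_div_right (setLIntegral_Ioo_le_mul_maxU g N hf hfg ha hb) _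
    _ = ENNReal.ofReal ((1 + 2 / (N * (b - a))) * N) * maxU shiftZ f (gridIndex N x) := by
        rw [div_eq_mul_inv, mul_right_comm, ← div_eq_mul_inv, ← ENNReal.ofReal_div_of_pos hL]
        congr 2
        field_simp
    _ = ENNReal.ofReal (1 + 2 / (N * (b - a))) * (N * maxU shiftZ f (gridIndex N x)) := by
        rw [ENNReal.ofReal_mul (by positivity), ENNReal.ofReal_natCast, mul_assoc]

lemma le_liminf_of_le_mul {a : ℝ≥0∞} {c u : ℕ → ℝ≥0∞} (hc : Tendsto c atTop (nhds 1))
    (h : ∀ᶠ n in atTop, a ≤ c n * u n) : a ≤ liminf u atTop := by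
  have hlim : Tendsto (fun n => a * (c n)⁻¹) atTop (nhds a) := by
    simpa using ENNReal.Tendsto.const_mul (tendsto_inv_iff.2 hc) (Or.inl (by simp))
  rw [← hlim.liminf_eq]
  exact liminf_le_liminf (h.mono fun n hn => ENNReal.div_le_of_le_mul (mul_comm (c n) _ ▸ hn))

lemma tendsto_one_add_div_natCast_mul {L : ℝ} (hL : 0 < L) :
    Tendsto (fun N : ℕ => ENNReal.ofReal (1 + 2 / (N * L))) atTop (nhds 1) := by
  have h : Tendsto (fun N : ℕ => 2 / ((N : ℝ) * L)) atTop (nhds 0) :=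
    tendsto_const_nhds.div_atTop (tendsto_natCast_atTop_atTop.atTop_mul_const hL)
  simpa using ENNReal.tendsto_ofReal (h.const_add 1)

lemma maxRU_le_liminf (g : ℝ → ℝ) {f : ℕ → ℤ → ℝ} (hf : ∀ N, 0 ≤ f N)
    (hfg : ∀ N ≠ 0, ∀ m, cellMass g N m ≤ ENNReal.ofReal (f N m)) (x : ℝ) :
    maxRU g x ≤ liminf (fun N : ℕ => (N : ℝ≥0∞) * maxU shiftZ (f N) (gridIndex N x)) atTop := by
  refine iSup₂_le fun a b => iSup₂_le fun ha hb => iSup_le fun hab => ?_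
  refine le_liminf_of_le_mul (tendsto_one_add_div_natCast_mul (sub_pos.2 hab)) ?_
  filter_upwards [eventually_ne_atTop 0] with N hN
  exact average_le_mul_scaled_maxU g hN (hf N) (hfg N hN) ha hb hab

lemma lintegral_rpow_scaled_maxU {p : ℝ} (hp : 0 ≤ p) {N : ℕ} (hN : N ≠ 0) (f : ℤ → ℝ) :
    ∫⁻ x, ((N : ℝ≥0∞) * maxU shiftZ f (gridIndex N x)) ^ p
      = (N : ℝ≥0∞) ^ (p - 1) * ∑' m, maxU shiftZ f m ^ p := by
  rw [lintegral_comp_gridIndex hN (fun m => ((N : ℝ≥0∞) * maxU shiftZ f m) ^ p)]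
  simp_rw [ENNReal.mul_rpow_of_nonneg _ _ hp]
  rw [ENNReal.tsum_mul_left, ← mul_assoc, ENNReal.rpow_sub _ _ (by simpa using hN) (by simp),
    ENNReal.rpow_one, ENNReal.div_eq_inv_mul]

def cellMassReal (g : ℝ → ℝ) (N : ℕ) (m : ℤ) : ℝ :=
  (cellMass g N m).toReal

lemma natCast_rpow_mul_ne_top {N : ℕ} (hN : N ≠ 0) (q : ℝ) {K : ℝ≥0∞} (hK : K ≠ ∞) :
    (N : ℝ≥0∞) ^ q * K ≠ ∞ :=
  ENNReal.mul_ne_top (by simp [ENNReal.rpow_eq_top_iff, hN]) hK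

lemma cellMass_ne_top {p : ℝ} (hp : 1 < p) {g : ℝ → ℝ} (hg : MemLp g (ENNReal.ofReal p) volume)
    {N : ℕ} (hN : N ≠ 0) (m : ℤ) : cellMass g N m ≠ ∞ := by
  intro hm
  have h := (ENNReal.le_tsum m).trans (tsum_cellMass_rpow_le hp.le hg.1 hN)
  rw [hm, ENNReal.top_rpow_of_pos (one_pos.trans hp), top_le_iff] at h
  exact natCast_rpow_mul_ne_top hN _ (lintegral_enorm_rpow_ne_top (one_pos.trans hp) hg) h

lemma lintegral_rpow_scaled_maxU_cellMassReal_le {p : ℝ} (hp : 1 < p) {C : ℝ≥0∞}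
    (hC : ∀ f : ℤ → ℝ, MemLp f (ENNReal.ofReal p) Measure.count →
      ∫⁻ m, maxU shiftZ f m ^ p ∂Measure.count ≤ C ^ p * ∫⁻ m, ‖f m‖ₑ ^ p ∂Measure.count)
    {g : ℝ → ℝ} (hg : MemLp g (ENNReal.ofReal p) volume) {N : ℕ} (hN : N ≠ 0) :
    ∫⁻ x, ((N : ℝ≥0∞) * maxU shiftZ (cellMassReal g N) (gridIndex N x)) ^ p
      ≤ C ^ p * ∫⁻ y, ‖g y‖ₑ ^ p := by
  have hp0 : 0 < p := one_pos.trans hp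
  set K := ∫⁻ y, ‖g y‖ₑ ^ p
  have hsum : ∑' m, ‖cellMassReal g N m‖ₑ ^ p ≤ (N : ℝ≥0∞) ^ (1 - p) * K := by
    simpa only [cellMassReal, Real.enorm_of_nonneg ENNReal.toReal_nonneg,
      ENNReal.ofReal_toReal (cellMass_ne_top hp hg hN _)] using tsum_cellMass_rpow_le hp.le hg.1 hN
  have hmem : MemLp (cellMassReal g N) (ENNReal.ofReal p) Measure.count := by
    refine ⟨(measurable_of_countable _).aestronglyMeasurable, ?_⟩
    rw [eLpNorm_lt_top_iff_lintegral_rpow_enorm_lt_top (by simpa using hp0) ENNReal.ofReal_ne_top,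
      ENNReal.toReal_ofReal hp0.le, lintegral_count]
    exact hsum.trans_lt (natCast_rpow_mul_ne_top hN _ (lintegral_enorm_rpow_ne_top hp0 hg)).lt_top
  have hdisc := hC _ hmem
  rw [lintegral_count, lintegral_count] at hdisc
  calc ∫⁻ x, ((N : ℝ≥0∞) * maxU shiftZ (cellMassReal g N) (gridIndex N x)) ^ p
      = (N : ℝ≥0∞) ^ (p - 1) * ∑' m, maxU shiftZ (cellMassReal g N) m ^ p :=
        lintegral_rpow_scaled_maxU hp0.le hN _
    _ ≤ (N : ℝ≥0∞) ^ (p - 1) * (C ^ p * ((N : ℝ≥0∞) ^ (1 - p) * K)) := by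
        gcongr
        exact hdisc.trans (by gcongr)
    _ = C ^ p * K := by
        rw [mul_left_comm, ← mul_assoc ((N : ℝ≥0∞) ^ (p - 1)),
          ← ENNReal.rpow_add _ _ (by simpa using hN) (by simp),
          sub_add_sub_cancel', sub_self, ENNReal.rpow_zero, one_mul]

lemma strongTypeBound_real_of_int {p : ℝ} (hp : 1 < p) {C : ℝ≥0∞}
    (hC : StrongTypeBound Measure.count (maxU shiftZ) p C) : StrongTypeBound volume maxRU p C := by
  have hp0 : 0 < p := one_pos.trans hp
  rw [strongTypeBound_iff hp0] at hC ⊢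
  intro g hg
  set h : ℕ → ℝ → ℝ≥0∞ := fun N x => (N : ℝ≥0∞) * maxU shiftZ (cellMassReal g N) (gridIndex N x)
  have hmeas : ∀ N, Measurable fun x => h N x ^ p := fun N =>
    (((measurable_of_countable (maxU shiftZ (cellMassReal g N))).comp
      (measurable_gridIndex N)).const_mul _).pow_const p
  have hlim : ∀ x, maxRU g x ^ p ≤ liminf (fun N => h N x ^ p) atTop := fun x => calc
    maxRU g x ^ p ≤ liminf (fun N => h N x) atTop ^ p :=
      ENNReal.rpow_le_rpow (maxRU_le_liminf g (fun N m => ENNReal.toReal_nonneg)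
        (fun N hN m => (ENNReal.ofReal_toReal (cellMass_ne_top hp hg hN m)).ge) x) hp0.le
    _ = liminf (fun N => h N x ^ p) atTop := (ENNReal.orderIsoRpow p hp0).liminf_apply
  calc ∫⁻ x, maxRU g x ^ p
      ≤ ∫⁻ x, liminf (fun N => h N x ^ p) atTop := lintegral_mono hlim
    _ ≤ liminf (fun N => ∫⁻ x, h N x ^ p) atTop := lintegral_liminf_le hmeas
    _ ≤ C ^ p * ∫⁻ y, ‖g y‖ₑ ^ p := liminf_le_of_frequently_le' <|
        (eventually_ne_atTop 0).frequently.mono fun N hN =>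
          lintegral_rpow_scaled_maxU_cellMassReal_le hp hC hg hN

/-- For `p ∈ (1,∞)`, the best constant in the strong type (p,p) inequality for the uncentered
maximal operator on the integers equals the best constant in the strong type (p,p) inequality
for the uncentered Hardy–Littlewood maximal operator on the real line. -/
theorem uncentered_strong_const_int_eq_real (p : ℝ) (hp : 1 < p) :
    strongConst (Measure.count : Measure ℤ) (maxU shiftZ) p = strongConstRU p := by
  rw [strongConstRU_eq, strongConst, strongConst]
  congr 1
  ext C
  exact ⟨strongTypeBound_real_of_int hp, strongTypeBound_int_of_real (one_pos.trans hp)⟩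

end
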